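/- Let f(x) be a 1-periodic function in ℝ^d (f(x+z) = f(x) for all z ∈ ℤ^d) such that f ∈ L²(Y). Then for any u ∈ L²(ℝ^d), ‖f^ε S_ε u‖_{L²(ℝ^d)} ≤ ‖f‖_{L²(Y)} ‖u‖_{L²(ℝ^d)}, where f^ε(x) = f(x/ε). -/

import Mathlib

open MeasureTheory Real Set Metric Filter
open scoped ENNReal NNReal Topology

noncomputable section

/-- Euclidean space `ℝ^d`. -/
abbrev Rd (d : ℕ) : Type := EuclideanSpace ℝ (Fin d)

variable {d : ℕ}

/-- The `i`-th partial derivative of a scalar function on `ℝ^d`. -/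
def pd (i : Fin d) (u : Rd d → ℝ) (x : Rd d) : ℝ :=
  fderiv ℝ u x (EuclideanSpace.single i 1)

/-- The periodicity cell `Y = [0,1)^d`. -/
def cellY (d : ℕ) : Set (Rd d) := {y | ∀ i, y i ∈ Ico (0 : ℝ) 1}

/-- `1`-periodicity of a function on `ℝ^d`. -/
def ZPeriodic (u : Rd d → ℝ) : Prop :=
  ∀ (y : Rd d) (z : Fin d → ℤ),
    u (y + (WithLp.equiv 2 (Fin d → ℝ)).symm fun i => (z i : ℝ)) = u y

/-- `L²(Ω)` norm of a scalar function. -/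
def L2 (Ω : Set (Rd d)) (u : Rd d → ℝ) : ℝ := (∫ x in Ω, u x ^ 2) ^ (1/2 : ℝ)

/-- `L²(Ω)` norm of a vector-valued function. -/
def L2V (Ω : Set (Rd d)) (u : Rd d → Fin d → ℝ) : ℝ :=
  (∫ x in Ω, ∑ α, u x α ^ 2) ^ (1/2 : ℝ)

/-- `L²(Ω)` norm of a matrix-valued function. -/
def L2M (Ω : Set (Rd d)) (U : Rd d → Fin d → Fin d → ℝ) : ℝ :=
  (∫ x in Ω, ∑ α, ∑ i, U x α i ^ 2) ^ (1/2 : ℝ)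

/-- `L²(Ω)` norm of a 3-tensor-valued function. -/
def L2T (Ω : Set (Rd d)) (U : Rd d → Fin d → Fin d → Fin d → ℝ) : ℝ :=
  (∫ x in Ω, ∑ α, ∑ i, ∑ j, U x α i j ^ 2) ^ (1/2 : ℝ)

/-- `H¹(Ω)` norm of a scalar function with (weak) gradient `Du`. -/
def H1n (Ω : Set (Rd d)) (u : Rd d → ℝ) (Du : Rd d → Fin d → ℝ) : ℝ :=
  (L2 Ω u ^ 2 + L2V Ω Du ^ 2) ^ (1/2 : ℝ)

/-- `H¹(Ω)` norm of a vector field with (weak) gradient `Du`. -/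
def H1V (Ω : Set (Rd d)) (u : Rd d → Fin d → ℝ) (Du : Rd d → Fin d → Fin d → ℝ) : ℝ :=
  (L2V Ω u ^ 2 + L2M Ω Du ^ 2) ^ (1/2 : ℝ)

/-- `H²(Ω)` norm of a vector field with (weak) derivatives `Du`, `D2u`. -/
def H2V (Ω : Set (Rd d)) (u : Rd d → Fin d → ℝ) (Du : Rd d → Fin d → Fin d → ℝ)
    (D2u : Rd d → Fin d → Fin d → Fin d → ℝ) : ℝ :=
  (L2V Ω u ^ 2 + L2M Ω Du ^ 2 + L2T Ω D2u ^ 2) ^ (1/2 : ℝ)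

/-- Test functions: smooth and compactly supported inside `Ω`. -/
def IsTestOn (Ω : Set (Rd d)) (φ : Rd d → ℝ) : Prop :=
  ContDiff ℝ (⊤ : ℕ∞) φ ∧ HasCompactSupport φ ∧ tsupport φ ⊆ Ω

/-- `du` is the `i`-th weak partial derivative of `u` on `Ω`. -/
def IsWeakDeriv (Ω : Set (Rd d)) (i : Fin d) (u du : Rd d → ℝ) : Prop :=
  ∀ φ : Rd d → ℝ, IsTestOn Ω φ →
    ∫ x in Ω, u x * pd i φ x = - ∫ x in Ω, du x * φ x

/-- `u ∈ H¹(Ω)` with weak gradient `Du`. -/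
def MemH1 (Ω : Set (Rd d)) (u : Rd d → ℝ) (Du : Rd d → Fin d → ℝ) : Prop :=
  MemLp u 2 (volume.restrict Ω) ∧ (∀ i, MemLp (fun x => Du x i) 2 (volume.restrict Ω)) ∧
    ∀ i, IsWeakDeriv Ω i u fun x => Du x i

/-- `u ∈ H¹(Ω; ℝ^d)` with weak gradient `Du` (`Du x α i = ∂ᵢ u^α (x)`). -/
def MemH1V (Ω : Set (Rd d)) (u : Rd d → Fin d → ℝ) (Du : Rd d → Fin d → Fin d → ℝ) : Prop :=
  ∀ α, MemH1 Ω (fun x => u x α) fun x => Du x α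

/-- `u ∈ H²(Ω; ℝ^d)` with weak derivatives `Du`, `D2u` (`D2u x α i j = ∂ⱼ ∂ᵢ u^α (x)`). -/
def MemH2V (Ω : Set (Rd d)) (u : Rd d → Fin d → ℝ) (Du : Rd d → Fin d → Fin d → ℝ)
    (D2u : Rd d → Fin d → Fin d → Fin d → ℝ) : Prop :=
  MemH1V Ω u Du ∧ (∀ α i j, MemLp (fun x => D2u x α i j) 2 (volume.restrict Ω)) ∧
    ∀ α i j, IsWeakDeriv Ω j (fun x => Du x α i) fun x => D2u x α i j

/-- `u ∈ L²(Ω; ℝ^d)`. -/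
def MemL2V (Ω : Set (Rd d)) (u : Rd d → Fin d → ℝ) : Prop :=
  ∀ α, MemLp (fun x => u x α) 2 (volume.restrict Ω)

/-- A coefficient tensor `a i j α β : ℝ^d → ℝ`. -/
abbrev Coeff (d : ℕ) := Fin d → Fin d → Fin d → Fin d → Rd d → ℝ

/-- The coefficient tensor is (bounded) measurable and satisfies the ellipticity condition
`μ|ξ|² ≤ aᵢⱼ^{αβ} ξᵢ^α ξⱼ^β ≤ μ⁻¹ |ξ|²`. -/
def Elliptic (μ : ℝ) (a : Coeff d) : Prop :=
  (∀ i j α β, Measurable (a i j α β)) ∧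
    ∀ (y : Rd d) (ξ : Fin d → Fin d → ℝ),
      μ * (∑ i, ∑ α, ξ i α ^ 2) ≤ (∑ i, ∑ j, ∑ α, ∑ β, a i j α β y * ξ i α * ξ j β) ∧
      (∑ i, ∑ j, ∑ α, ∑ β, a i j α β y * ξ i α * ξ j β) ≤ μ⁻¹ * ∑ i, ∑ α, ξ i α ^ 2

/-- 1-periodicity of the coefficient tensor. -/
def CoeffPeriodic (a : Coeff d) : Prop := ∀ i j α β, ZPeriodic (a i j α β)

/-- The adjoint coefficient tensor `A*`. -/
def adjCoeff (a : Coeff d) : Coeff d := fun i j α β y => a j i β α y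

/-- The rescaled coefficients `A(x/ε)`. -/
def scaleCoeff (ε : ℝ) (a : Coeff d) : Coeff d := fun i j α β x => a i j α β (ε⁻¹ • x)

/-- The Steklov smoothing operator `(S_ε u)(x) = ∫_Y u(x - εz) dz`. -/
def stek (ε : ℝ) (u : Rd d → ℝ) (x : Rd d) : ℝ := ∫ z in cellY d, u (x - ε • z)

/-- Surface measure: the `(d-1)`-dimensional Hausdorff measure. -/
def surf (d : ℕ) : Measure (Rd d) := Measure.hausdorffMeasure ((d : ℝ) - 1)

/-- A bounded domain whose boundary is locally the graph of a function of class `P`. -/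
def IsGraphDomain (Ω : Set (Rd d)) (P : (Rd d → ℝ) → Prop) : Prop :=
  IsOpen Ω ∧ Bornology.IsBounded Ω ∧ Ω.Nonempty ∧
    ∀ x ∈ frontier Ω, ∃ r > (0 : ℝ), ∃ ν : Rd d, ‖ν‖ = 1 ∧ ∃ ψ : Rd d → ℝ, P ψ ∧
      ∀ y ∈ ball x r, (y ∈ Ω ↔ ψ (y - (inner ℝ y ν : ℝ) • ν) < (inner ℝ y ν : ℝ))

/-- Bounded Lipschitz domain. -/
def IsLipschitzDomain (Ω : Set (Rd d)) : Prop :=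
  IsGraphDomain Ω fun ψ => ∃ L : ℝ≥0, LipschitzWith L ψ

/-- Bounded `C¹` domain. -/
def IsC1Domain (Ω : Set (Rd d)) : Prop := IsGraphDomain Ω fun ψ => ContDiff ℝ 1 ψ

/-- Bounded `C^{1,1}` domain. -/
def IsC11Domain (Ω : Set (Rd d)) : Prop :=
  IsGraphDomain Ω fun ψ => ContDiff ℝ 1 ψ ∧ ∃ L : ℝ≥0, LipschitzWith L (fderiv ℝ ψ)

/-- Inner boundary layer `Ω_r = {x ∈ Ω : dist(x, ∂Ω) ≤ r}`. -/
def innerNbhd (Ω : Set (Rd d)) (r : ℝ) : Set (Rd d) := {x ∈ Ω | infDist x (frontier Ω) ≤ r}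

/-- Boundary layer `(∂Ω)_r = {x : dist(x, ∂Ω) ≤ r}`. -/
def bdryNbhd (Ω : Set (Rd d)) (r : ℝ) : Set (Rd d) := {x | infDist x (frontier Ω) ≤ r}

/-- The correctors `(χ_j^β, π_j^β)` for the Stokes system: 1-periodic solutions of the
cell problem `L₁(χ_j^β + P_j^β) + ∇π_j^β = 0`, `div(χ_j^β) = 0`, with zero mean over `Y`.
Here `χ j β y γ = χ_j^{γβ}(y)` and `Dχ j β y γ k = ∂_k χ_j^{γβ}(y)`. -/
structure Corrector (a : Coeff d) (χ : Fin d → Fin d → Rd d → Fin d → ℝ)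
    (Dχ : Fin d → Fin d → Rd d → Fin d → Fin d → ℝ)
    (pic : Fin d → Fin d → Rd d → ℝ) : Prop where
  periodic_χ : ∀ j β γ, ZPeriodic fun y => χ j β y γ
  periodic_Dχ : ∀ j β γ k, ZPeriodic fun y => Dχ j β y γ k
  periodic_π : ∀ j β, ZPeriodic (pic j β)
  mem_χ : ∀ j β γ, MemLp (fun y => χ j β y γ) 2 (volume.restrict (cellY d))
  mem_Dχ : ∀ j β γ k, MemLp (fun y => Dχ j β y γ k) 2 (volume.restrict (cellY d))
  mem_π : ∀ j β, MemLp (pic j β) 2 (volume.restrict (cellY d))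
  weak_deriv : ∀ j β γ k, IsWeakDeriv univ k (fun y => χ j β y γ) fun y => Dχ j β y γ k
  div_free : ∀ j β, ∀ᵐ y ∂(volume : Measure (Rd d)), (∑ γ, Dχ j β y γ γ) = 0
  mean_χ : ∀ j β γ, (∫ y in cellY d, χ j β y γ) = 0
  mean_π : ∀ j β, (∫ y in cellY d, pic j β y) = 0
  cell_eq : ∀ (j β : Fin d) (φ : Rd d → Fin d → ℝ),
    (∀ α, ContDiff ℝ (⊤ : ℕ∞) fun y => φ y α) → (∀ α, HasCompactSupport fun y => φ y α) →
    (∫ y : Rd d, ∑ i, ∑ k, ∑ α, ∑ γ,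
        a i k α γ y * (Dχ j β y γ k + if k = j ∧ γ = β then 1 else 0) * pd i (fun z => φ z α) y)
      = ∫ y : Rd d, pic j β y * ∑ α, pd α (fun z => φ z α) y

/-- The homogenized coefficient tensor `Â`. -/
def Ahat (a : Coeff d) (Dχ : Fin d → Fin d → Rd d → Fin d → Fin d → ℝ) : Coeff d :=
  fun i j α β _ => ∫ y in cellY d, (a i j α β y + ∑ k, ∑ γ, a i k α γ y * Dχ j β y γ k)

/-- The tensor `b_{ij}^{αβ} = a_{ij}^{αβ} + a_{ik}^{αγ} ∂_k χ_j^{γβ} - â_{ij}^{αβ}`. -/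
def bTensor (a : Coeff d) (Dχ : Fin d → Fin d → Rd d → Fin d → Fin d → ℝ) : Coeff d :=
  fun i j α β y =>
    a i j α β y + (∑ k, ∑ γ, a i k α γ y * Dχ j β y γ k) - Ahat a Dχ i j α β y

/-- Weak solution of the Neumann problem for the Stokes system with coefficient tensor `A`
(already evaluated at the relevant scale): `-div(A∇u) + ∇p = F`, `div(u) = g` in `Ω`,
`∂u/∂ν - p n = f` on `∂Ω`. -/
def IsNeumannSol (Ω : Set (Rd d)) (A : Coeff d) (u : Rd d → Fin d → ℝ)
    (Du : Rd d → Fin d → Fin d → ℝ) (p : Rd d → ℝ) (F : Rd d → Fin d → ℝ)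
    (g : Rd d → ℝ) (f : Rd d → Fin d → ℝ) : Prop :=
  MemH1V Ω u Du ∧ MemLp p 2 (volume.restrict Ω) ∧
    (∀ᵐ x ∂volume.restrict Ω, (∑ α, Du x α α) = g x) ∧
    ∀ φ : Rd d → Fin d → ℝ, (∀ α, ContDiff ℝ (⊤ : ℕ∞) fun x => φ x α) →
      ((∫ x in Ω, ∑ i, ∑ j, ∑ α, ∑ β, A i j α β x * Du x β j * pd i (fun y => φ y α) x) -
          ∫ x in Ω, p x * ∑ α, pd α (fun y => φ y α) x) =
        (∫ x in Ω, ∑ α, F x α * φ x α) +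
          ∫ x in frontier Ω, (∑ α, f x α * φ x α) ∂(surf d)

/-- The compatibility condition `∫_Ω F + ∫_{∂Ω} f = 0`. -/
def Compat (Ω : Set (Rd d)) (F f : Rd d → Fin d → ℝ) : Prop :=
  ∀ α, (∫ x in Ω, F x α) + (∫ x in frontier Ω, f x α ∂(surf d)) = 0

/-- All the data of the homogenization problem: coefficients, correctors, Neumann data and
the solutions of the `ε`-problem and the homogenized problem. -/
structure SolData (d : ℕ) where
  a : Coeff d
  χ : Fin d → Fin d → Rd d → Fin d → ℝ
  Dχ : Fin d → Fin d → Rd d → Fin d → Fin d → ℝ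
  pic : Fin d → Fin d → Rd d → ℝ
  F : Rd d → Fin d → ℝ
  g : Rd d → ℝ
  Dg : Rd d → Fin d → ℝ
  f : Rd d → Fin d → ℝ
  uε : Rd d → Fin d → ℝ
  Duε : Rd d → Fin d → Fin d → ℝ
  pε : Rd d → ℝ
  u0 : Rd d → Fin d → ℝ
  Du0 : Rd d → Fin d → Fin d → ℝ
  D2u0 : Rd d → Fin d → Fin d → Fin d → ℝ
  p0 : Rd d → ℝ

/-- Validity of the data: `A` is elliptic and periodic, `(χ, π)` are the correctors,
`F ∈ L²(Ω;ℝ^d)`, `g ∈ H¹(Ω)`, `f ∈ L²(∂Ω;ℝ^d)` with the compatibility condition,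
`(uε, pε)` and `(u0, p0)` are weak solutions of the `ε`- and homogenized Neumann problems,
and `u0 ∈ H²(Ω;ℝ^d)`. -/
def SolData.Valid (S : SolData d) (Ω : Set (Rd d)) (μ ε : ℝ) : Prop :=
  Elliptic μ S.a ∧ CoeffPeriodic S.a ∧ Corrector S.a S.χ S.Dχ S.pic ∧
    MemL2V Ω S.F ∧ (∀ α, IntegrableOn (fun x => S.F x α) Ω) ∧
    MemH1 Ω S.g S.Dg ∧
    (∀ α, MemLp (fun x => S.f x α) 2 ((surf d).restrict (frontier Ω))) ∧
    (∀ α, Integrable (fun x => S.f x α) ((surf d).restrict (frontier Ω))) ∧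
    Compat Ω S.F S.f ∧
    IsNeumannSol Ω (scaleCoeff ε S.a) S.uε S.Duε S.pε S.F S.g S.f ∧
    IsNeumannSol Ω (Ahat S.a S.Dχ) S.u0 S.Du0 S.p0 S.F S.g S.f ∧
    MemH2V Ω S.u0 S.Du0 S.D2u0

/-- An `H²(ℝ^d)` extension `ũ₀` of `u₀` together with its weak derivatives. -/
structure ExtData (d : ℕ) where
  ut : Rd d → Fin d → ℝ
  Dut : Rd d → Fin d → Fin d → ℝ
  D2ut : Rd d → Fin d → Fin d → Fin d → ℝ

/-- `ũ₀` extends `u₀` and `‖ũ₀‖_{H²(ℝ^d)} ≤ C₀ ‖u₀‖_{H²(Ω)}`. -/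
def ExtData.Valid (E : ExtData d) (Ω : Set (Rd d)) (S : SolData d) (C₀ : ℝ) : Prop :=
  MemH2V univ E.ut E.Dut E.D2ut ∧
    (∀ᵐ x ∂volume.restrict Ω, ∀ α, E.ut x α = S.u0 x α) ∧
    (∀ᵐ x ∂volume.restrict Ω, ∀ α i, E.Dut x α i = S.Du0 x α i) ∧
    (∀ᵐ x ∂volume.restrict Ω, ∀ α i j, E.D2ut x α i j = S.D2u0 x α i j) ∧
    H2V univ E.ut E.Dut E.D2ut ≤ C₀ * H2V Ω S.u0 S.Du0 S.D2u0

/-- The corrector term `(χ^ε S_ε(∇ũ₀))^α`. -/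
def corrTerm (ε : ℝ) (χ : Fin d → Fin d → Rd d → Fin d → ℝ)
    (Dut : Rd d → Fin d → Fin d → ℝ) (x : Rd d) (α : Fin d) : ℝ :=
  ∑ j, ∑ β, χ j β (ε⁻¹ • x) α * stek ε (fun y => Dut y β j) x

/-- The gradient `∂_i (ε χ^ε S_ε(∇ũ₀))^α`. -/
def corrGrad (ε : ℝ) (χ : Fin d → Fin d → Rd d → Fin d → ℝ)
    (Dχ : Fin d → Fin d → Rd d → Fin d → Fin d → ℝ)
    (Dut : Rd d → Fin d → Fin d → ℝ) (D2ut : Rd d → Fin d → Fin d → Fin d → ℝ)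
    (x : Rd d) (α i : Fin d) : ℝ :=
  ∑ j, ∑ β, (Dχ j β (ε⁻¹ • x) α i * stek ε (fun y => Dut y β j) x
    + ε * χ j β (ε⁻¹ • x) α * stek ε (fun y => D2ut y β j i) x)

/-- `v_ε = u_ε - u₀ - ε χ^ε S_ε(∇ũ₀)`. -/
def vF (S : SolData d) (E : ExtData d) (ε : ℝ) : Rd d → Fin d → ℝ :=
  fun x α => S.uε x α - S.u0 x α - ε * corrTerm ε S.χ E.Dut x α

/-- The gradient of `v_ε`. -/
def DvF (S : SolData d) (E : ExtData d) (ε : ℝ) : Rd d → Fin d → Fin d → ℝ :=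
  fun x α i => S.Duε x α i - S.Du0 x α i - corrGrad ε S.χ S.Dχ E.Dut E.D2ut x α i

/-- `π^ε S_ε(∇ũ₀)`. -/
def piTerm (ε : ℝ) (pic : Fin d → Fin d → Rd d → ℝ)
    (Dut : Rd d → Fin d → Fin d → ℝ) (x : Rd d) : ℝ :=
  ∑ j, ∑ β, pic j β (ε⁻¹ • x) * stek ε (fun y => Dut y β j) x

/-- `q^ε S_ε(∇²ũ₀) = q_{ij}^β(x/ε) S_ε(∂²ũ₀^β/∂x_j∂x_i)`. -/
def qTerm (ε : ℝ) (q : Fin d → Fin d → Fin d → Rd d → ℝ)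
    (D2ut : Rd d → Fin d → Fin d → Fin d → ℝ) (x : Rd d) : ℝ :=
  ∑ i, ∑ j, ∑ β, q i j β (ε⁻¹ • x) * stek ε (fun y => D2ut y β i j) x

/-- The bilinear form `a_ε(u, v) = ∫_Ω A ∇u · ∇v`, in terms of the gradients. -/
def aForm (Ω : Set (Rd d)) (A : Coeff d) (DU Dφ : Rd d → Fin d → Fin d → ℝ) : ℝ :=
  ∫ x in Ω, ∑ i, ∑ j, ∑ α, ∑ β, A i j α β x * DU x β j * Dφ x α i

/-- The dual correctors `(Φ_{kij}^{αβ}, q_{ij}^β)` in `H¹_per(Y)`: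
`b_{ij}^{αβ} = ∂_k Φ_{kij}^{αβ} + ∂_α q_{ij}^β`, `Φ_{kij}^{αβ} = -Φ_{ikj}^{αβ}` and
`π_j^β = ∂_i q_{ij}^β`. -/
structure DualCorrector (a : Coeff d) (Dχ : Fin d → Fin d → Rd d → Fin d → Fin d → ℝ)
    (pic : Fin d → Fin d → Rd d → ℝ)
    (Φ : Fin d → Fin d → Fin d → Fin d → Fin d → Rd d → ℝ)
    (DΦ : Fin d → Fin d → Fin d → Fin d → Fin d → Rd d → Fin d → ℝ)
    (q : Fin d → Fin d → Fin d → Rd d → ℝ)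
    (Dq : Fin d → Fin d → Fin d → Rd d → Fin d → ℝ) : Prop where
  periodic_Φ : ∀ k i j α β, ZPeriodic (Φ k i j α β)
  periodic_q : ∀ i j β, ZPeriodic (q i j β)
  mem_Φ : ∀ k i j α β, MemLp (Φ k i j α β) 2 (volume.restrict (cellY d))
  mem_DΦ : ∀ k i j α β l, MemLp (fun y => DΦ k i j α β y l) 2 (volume.restrict (cellY d))
  mem_q : ∀ i j β, MemLp (q i j β) 2 (volume.restrict (cellY d))
  mem_Dq : ∀ i j β l, MemLp (fun y => Dq i j β y l) 2 (volume.restrict (cellY d))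
  weak_deriv_Φ : ∀ k i j α β l, IsWeakDeriv univ l (Φ k i j α β) fun y => DΦ k i j α β y l
  weak_deriv_q : ∀ i j β l, IsWeakDeriv univ l (q i j β) fun y => Dq i j β y l
  antisymm : ∀ k i j α β y, Φ k i j α β y = - Φ i k j α β y
  decomp : ∀ i j α β, ∀ᵐ y ∂(volume : Measure (Rd d)),
    bTensor a Dχ i j α β y = (∑ k, DΦ k i j α β y k) + Dq i j β y α
  pi_rel : ∀ j β, ∀ᵐ y ∂(volume : Measure (Rd d)), pic j β y = ∑ i, Dq i j β y i

/-- Smooth vector-valued functions. -/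
def smoothV (φ : Rd d → Fin d → ℝ) : Prop := ∀ α, ContDiff ℝ (⊤ : ℕ∞) fun x => φ x α

/-- The (pointwise) gradient of a smooth vector field. -/
def sgrad (φ : Rd d → Fin d → ℝ) : Rd d → Fin d → Fin d → ℝ :=
  fun x α i => pd i (fun y => φ y α) x

/-- `F ∈ H^{-1}(Ω; ℝ^d)` (as a function, via boundedness of the pairing). -/
def MemHminusOne (Ω : Set (Rd d)) (F : Rd d → Fin d → ℝ) : Prop :=
  (∀ α, IntegrableOn (fun x => F x α) Ω) ∧
    ∃ M : ℝ, ∀ φ : Rd d → Fin d → ℝ, smoothV φ →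
      (∀ α, HasCompactSupport fun x => φ x α) → (∀ α, tsupport (fun x => φ x α) ⊆ Ω) →
      |∫ x in Ω, ∑ α, F x α * φ x α| ≤ M * H1V Ω φ (sgrad φ)

/-- `f ∈ H^{-1/2}(∂Ω; ℝ^d)` (as a function, via boundedness of the pairing). -/
def MemHminusHalf (Ω : Set (Rd d)) (f : Rd d → Fin d → ℝ) : Prop :=
  (∀ α, Integrable (fun x => f x α) ((surf d).restrict (frontier Ω))) ∧
    ∃ M : ℝ, ∀ φ : Rd d → Fin d → ℝ, smoothV φ →
      |∫ x in frontier Ω, (∑ α, f x α * φ x α) ∂(surf d)| ≤ M * H1V Ω φ (sgrad φ)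

/-- The `H^{-1}(Ω)` norm, as the dual norm against smooth compactly supported functions. -/
def HminusOneNorm (Ω : Set (Rd d)) (F : Rd d → Fin d → ℝ) : ℝ :=
  sSup {r | ∃ φ : Rd d → Fin d → ℝ, smoothV φ ∧ (∀ α, HasCompactSupport fun x => φ x α) ∧
    (∀ α, tsupport (fun x => φ x α) ⊆ Ω) ∧ H1V Ω φ (sgrad φ) ≤ 1 ∧
    r = ∫ x in Ω, ∑ α, F x α * φ x α}

/-- The `H^{-1/2}(∂Ω)` norm, as the dual norm against (traces of) smooth functions. -/
def HminusHalfNorm (Ω : Set (Rd d)) (f : Rd d → Fin d → ℝ) : ℝ :=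
  sSup {r | ∃ φ : Rd d → Fin d → ℝ, smoothV φ ∧ H1V Ω φ (sgrad φ) ≤ 1 ∧
    r = ∫ x in frontier Ω, (∑ α, f x α * φ x α) ∂(surf d)}

/-! Jensen's inequality on the probability space `Y` gives `|S_ε u(x)|² ≤ ∫_Y |u(x - εz)|² dz`.
Integrating against `|f(x/ε)|²` and exchanging the integrals, the substitution `x ↦ x + εz`
moves the shift onto the weight, which becomes `|f(x/ε + z)|²`; by periodicity
`∫_Y |f(c + z)|² dz = ‖f‖²_{L²(Y)}` for every `c`, because a translate of a fundamental domain
of `ℤ^d` is again one. -/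

open scoped Pointwise

lemma cellY_eq_fundamentalDomain (d : ℕ) :
    cellY d = ZSpan.fundamentalDomain (PiLp.basisFun 2 ℝ (Fin d)) := by
  ext x
  simp [cellY, ZSpan.fundamentalDomain, PiLp.basisFun_repr]

lemma volume_cellY (d : ℕ) : volume (cellY d) = 1 := by
  have h : cellY d = (MeasurableEquiv.toLp 2 (Fin d → ℝ)).symm ⁻¹'
      (univ.pi fun _ : Fin d => Ico (0 : ℝ) 1) := by
    ext x
    simp [cellY]
  rw [h, (EuclideanSpace.volume_preserving_symm_measurableEquiv_toLp (Fin d)).measure_preimage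
    (MeasurableSet.univ_pi fun _ => measurableSet_Ico).nullMeasurableSet]
  simp [volume_pi_pi]

instance (d : ℕ) : IsProbabilityMeasure (volume.restrict (cellY d)) :=
  ⟨by rw [Measure.restrict_apply_univ, volume_cellY]⟩

lemma ZPeriodic.apply_add_of_mem_span {f : Rd d → ℝ} (hf : ZPeriodic f) {v : Rd d}
    (hv : v ∈ Submodule.span ℤ (range (PiLp.basisFun 2 ℝ (Fin d)))) (y : Rd d) :
    f (v + y) = f y := by
  obtain ⟨z, rfl⟩ := (Submodule.mem_span_range_iff_exists_fun ℤ).mp hv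
  have hz : ∑ i, z i • PiLp.basisFun 2 ℝ (Fin d) i =
      (WithLp.equiv 2 (Fin d → ℝ)).symm fun i => (z i : ℝ) := by
    ext j
    simp [PiLp.basisFun_apply, Pi.single_apply]
  rw [hz, add_comm]
  exact hf y z

lemma ZPeriodic.setLIntegral_cellY_comp_add {f : Rd d → ℝ} (hf : ZPeriodic f) (G : ℝ → ℝ≥0∞)
    (c : Rd d) : ∫⁻ z in cellY d, G (f (c + z)) = ∫⁻ z in cellY d, G (f z) := by
  have hY := ZSpan.isAddFundamentalDomain' (PiLp.basisFun 2 ℝ (Fin d)) volume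
  rw [← cellY_eq_fundamentalDomain] at hY
  -- registered for the submodule, not for its additive subgroup
  have : Countable (Submodule.span ℤ (range (PiLp.basisFun 2 ℝ (Fin d)))).toAddSubgroup :=
    inferInstanceAs (Countable (Submodule.span ℤ (range (PiLp.basisFun 2 ℝ (Fin d)))))
  calc ∫⁻ z in cellY d, G (f (c + z))
      = ∫⁻ z in c +ᵥ cellY d, G (f z) := by
        rw [← Set.image_vadd]
        exact (measurePreserving_add_left volume c).setLIntegral_comp_emb
          (measurableEmbedding_addLeft c) (G ∘ f) _
    _ = ∫⁻ z in cellY d, G (f z) :=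
        (hY.vadd_of_comm c).setLIntegral_eq hY _ fun v y =>
          congrArg G (hf.apply_add_of_mem_span v.2 y)

section Lp

variable {α E : Type*} [MeasurableSpace α] {μ : Measure α} [NormedAddCommGroup E]

lemma eLpNorm_two_sq (v : α → E) : eLpNorm v 2 μ ^ 2 = ∫⁻ x, ‖v x‖ₑ ^ 2 ∂μ := by
  simpa [ENNReal.rpow_two] using
    eLpNorm_nnreal_pow_eq_lintegral (f := v) (μ := μ) (p := 2) two_ne_zero

lemma enorm_integral_sq_le_lintegral [NormedSpace ℝ E] [IsProbabilityMeasure μ] {v : α → E}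
    (hv : AEStronglyMeasurable v μ) : ‖∫ x, v x ∂μ‖ₑ ^ 2 ≤ ∫⁻ x, ‖v x‖ₑ ^ 2 ∂μ := by
  have h : ‖∫ x, v x ∂μ‖ₑ ≤ eLpNorm v 2 μ := calc
    ‖∫ x, v x ∂μ‖ₑ ≤ ∫⁻ x, ‖v x‖ₑ ∂μ := enorm_integral_le_lintegral_enorm v
    _ = eLpNorm v 1 μ := eLpNorm_one_eq_lintegral_enorm.symm
    _ ≤ eLpNorm v 2 μ := eLpNorm_le_eLpNorm_of_exponent_le one_le_two hv
  rw [← eLpNorm_two_sq]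
  gcongr

end Lp

lemma L2_eq_toReal_eLpNorm {Ω : Set (Rd d)} {u : Rd d → ℝ}
    (hu : AEStronglyMeasurable u (volume.restrict Ω)) :
    L2 Ω u = (eLpNorm u 2 (volume.restrict Ω)).toReal := by
  have h : ∫⁻ x in Ω, ENNReal.ofReal (u x ^ 2) = eLpNorm u 2 (volume.restrict Ω) ^ 2 := by
    rw [eLpNorm_two_sq]
    refine lintegral_congr fun x => ?_
    rw [← sq_abs, ENNReal.ofReal_pow (abs_nonneg _), Real.enorm_eq_ofReal_abs]
  rw [L2, integral_eq_lintegral_of_nonneg_ae (ae_of_all _ fun x => sq_nonneg _) (hu.pow 2), h,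
    ENNReal.toReal_pow, ← Real.sqrt_eq_rpow, Real.sqrt_sq ENNReal.toReal_nonneg]

section Steklov

variable {ε : ℝ}

lemma stek_congr_ae (hε : ε ≠ 0) {u v : Rd d → ℝ} (h : u =ᵐ[volume] v) : stek ε u = stek ε v := by
  funext x
  have hq : Measure.QuasiMeasurePreserving (fun z : Rd d => x - ε • z) volume volume :=
    (quasiMeasurePreserving_sub_left_of_right_invariant volume x).comp
      (Measure.quasiMeasurePreserving_smul volume hε)
  exact integral_congr_ae (ae_restrict_of_ae (hq.ae_eq_comp h))

lemma stronglyMeasurable_stek (hε : ε ≠ 0) {u : Rd d → ℝ} (hu : AEStronglyMeasurable u volume) :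
    StronglyMeasurable (stek ε u) := by
  rw [stek_congr_ae hε hu.ae_eq_mk]
  exact (hu.stronglyMeasurable_mk.measurable.comp
    (measurable_fst.sub (measurable_snd.const_smul ε))).stronglyMeasurable.integral_prod_right'

lemma lintegral_mul_setLIntegral_sub_smul (hε : ε ≠ 0) {F G : Rd d → ℝ≥0∞} (hF : Measurable F)
    (hG : Measurable G) (s : Set (Rd d)) :
    ∫⁻ x, F (ε⁻¹ • x) * ∫⁻ z in s, G (x - ε • z) =
      ∫⁻ x, G x * ∫⁻ z in s, F (ε⁻¹ • x + z) := calc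
  _ = ∫⁻ x, ∫⁻ z in s, F (ε⁻¹ • x) * G (x - ε • z) :=
      lintegral_congr fun x => (lintegral_const_mul _ (by fun_prop)).symm
  _ = ∫⁻ z in s, ∫⁻ x, F (ε⁻¹ • x) * G (x - ε • z) :=
      lintegral_lintegral_swap (by fun_prop)
  _ = ∫⁻ z in s, ∫⁻ x, G x * F (ε⁻¹ • x + z) := by
      refine lintegral_congr fun z => ?_
      rw [← lintegral_add_right_eq_self _ (ε • z)]
      simp [smul_add, smul_smul, inv_mul_cancel₀ hε, mul_comm]
  _ = ∫⁻ x, ∫⁻ z in s, G x * F (ε⁻¹ • x + z) :=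
      lintegral_lintegral_swap (by fun_prop)
  _ = _ := lintegral_congr fun x => lintegral_const_mul _ (by fun_prop)

lemma lintegral_enorm_comp_smul_mul_stek_sq_le (hε : ε ≠ 0) {f u : Rd d → ℝ} (hf : Measurable f)
    (hfper : ZPeriodic f) (hu : Measurable u) :
    ∫⁻ x, ‖f (ε⁻¹ • x) * stek ε u x‖ₑ ^ 2 ≤
      (∫⁻ y in cellY d, ‖f y‖ₑ ^ 2) * ∫⁻ y, ‖u y‖ₑ ^ 2 := calc
  _ ≤ ∫⁻ x, ‖f (ε⁻¹ • x)‖ₑ ^ 2 * ∫⁻ z in cellY d, ‖u (x - ε • z)‖ₑ ^ 2 := by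
      refine lintegral_mono fun x => ?_
      rw [enorm_mul, mul_pow]
      gcongr
      exact enorm_integral_sq_le_lintegral (by fun_prop : Measurable _).aestronglyMeasurable
  _ = ∫⁻ x, ‖u x‖ₑ ^ 2 * ∫⁻ z in cellY d, ‖f (ε⁻¹ • x + z)‖ₑ ^ 2 :=
      lintegral_mul_setLIntegral_sub_smul hε (F := fun y => ‖f y‖ₑ ^ 2)
        (G := fun y => ‖u y‖ₑ ^ 2) (by fun_prop) (by fun_prop) _
  _ = ∫⁻ x, ‖u x‖ₑ ^ 2 * ∫⁻ y in cellY d, ‖f y‖ₑ ^ 2 := by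
      simp_rw [hfper.setLIntegral_cellY_comp_add fun t => ‖t‖ₑ ^ 2]
  _ = _ := by rw [lintegral_mul_const _ (by fun_prop), mul_comm]

lemma eLpNorm_comp_smul_mul_stek_le (hε : ε ≠ 0) {f u : Rd d → ℝ} (hf : Measurable f)
    (hfper : ZPeriodic f) (hu : AEStronglyMeasurable u volume) :
    eLpNorm (fun x => f (ε⁻¹ • x) * stek ε u x) 2 volume ≤
      eLpNorm f 2 (volume.restrict (cellY d)) * eLpNorm u 2 volume := by
  rw [stek_congr_ae hε hu.ae_eq_mk, eLpNorm_congr_ae hu.ae_eq_mk,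
    ← ENNReal.pow_le_pow_left_iff two_ne_zero, mul_pow, eLpNorm_two_sq, eLpNorm_two_sq,
    eLpNorm_two_sq]
  exact lintegral_enorm_comp_smul_mul_stek_sq_le hε hf hfper hu.stronglyMeasurable_mk.measurable

end Steklov

/-- Proposition 2.5: for a `1`-periodic `f ∈ L²(Y)` and `u ∈ L²(ℝ^d)`,
`‖f^ε S_ε u‖_{L²(ℝ^d)} ≤ ‖f‖_{L²(Y)} ‖u‖_{L²(ℝ^d)}`. -/
theorem steklov_smoothing_multiplication (d : ℕ) (ε : ℝ) (hε : 0 < ε)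
    (f : Rd d → ℝ) (hfm : Measurable f) (hfper : ZPeriodic f)
    (hf : MemLp f 2 (volume.restrict (cellY d)))
    (u : Rd d → ℝ) (hu : MemLp u 2 (volume : Measure (Rd d))) :
    L2 univ (fun x => f (ε⁻¹ • x) * stek ε u x) ≤ L2 (cellY d) f * L2 univ u := by
  have hfu : AEStronglyMeasurable (fun x => f (ε⁻¹ • x) * stek ε u x) volume :=
    (hfm.comp (measurable_const_smul ε⁻¹)).aestronglyMeasurable.mul
      (stronglyMeasurable_stek hε.ne' hu.1).aestronglyMeasurable
  rw [L2_eq_toReal_eLpNorm hfu.restrict, L2_eq_toReal_eLpNorm hf.1,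
    L2_eq_toReal_eLpNorm hu.1.restrict, Measure.restrict_univ, ← ENNReal.toReal_mul]
  exact ENNReal.toReal_mono (ENNReal.mul_ne_top hf.eLpNorm_ne_top hu.eLpNorm_ne_top)
    (eLpNorm_comp_smul_mul_stek_le hε.ne' hfm hfper hu.1)
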